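/- Let W_1, ..., W_K be independent uniform random variables, S a random variable independent of (W_1,...,W_K, Q), and A a random variable that is a deterministic function of (Q, W_{[1:K]}, S). If I(W_{\bar k}; A, Q) = 0 and H(W_k | A, Q) ≤ δ, then H(A | Q) ≤ H(S) + H(W_k) + δ, where W_{\bar k} denotes all messages except W_k. -/

import Mathlib

open Finset

/-- Probability that a finite random variable `X` (on a finite outcome space with
probability mass function `p`) takes the value `a`. -/
noncomputable def probOf {Ω : Type*} [Fintype Ω] {α : Type*} [Fintype α] [DecidableEq α]
    (p : Ω → ℝ) (X : Ω → α) (a : α) : ℝ :=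
  ∑ ω ∈ univ.filter (fun ω => X ω = a), p ω

/-- Shannon entropy `H(X)` of a finite random variable. -/
noncomputable def entH {Ω : Type*} [Fintype Ω] {α : Type*} [Fintype α] [DecidableEq α]
    (p : Ω → ℝ) (X : Ω → α) : ℝ :=
  - ∑ a : α, probOf p X a * Real.log (probOf p X a)

/-- Conditional Shannon entropy `H(X | Y) = H(X, Y) - H(Y)`. -/
noncomputable def condH {Ω : Type*} [Fintype Ω] {α β : Type*}
    [Fintype α] [DecidableEq α] [Fintype β] [DecidableEq β]
    (p : Ω → ℝ) (X : Ω → α) (Y : Ω → β) : ℝ :=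
  entH p (fun ω => (X ω, Y ω)) - entH p Y

/-- Mutual information `I(X ; Y) = H(X) + H(Y) - H(X, Y)`. -/
noncomputable def mutI {Ω : Type*} [Fintype Ω] {α β : Type*}
    [Fintype α] [DecidableEq α] [Fintype β] [DecidableEq β]
    (p : Ω → ℝ) (X : Ω → α) (Y : Ω → β) : ℝ :=
  entH p X + entH p Y - entH p (fun ω => (X ω, Y ω))

/-- Conditional mutual information `I(X ; Y | Z) = H(X|Z) + H(Y|Z) - H(X,Y|Z)`. -/
noncomputable def cmutI {Ω : Type*} [Fintype Ω] {α β γ : Type*}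
    [Fintype α] [DecidableEq α] [Fintype β] [DecidableEq β] [Fintype γ] [DecidableEq γ]
    (p : Ω → ℝ) (X : Ω → α) (Y : Ω → β) (Z : Ω → γ) : ℝ :=
  condH p X Z + condH p Y Z - condH p (fun ω => (X ω, Y ω)) Z

/-- `p` is a probability mass function on the finite outcome space `Ω`. -/
def IsPMF {Ω : Type*} [Fintype Ω] (p : Ω → ℝ) : Prop :=
  (∀ ω, 0 ≤ p ω) ∧ ∑ ω, p ω = 1

/-!
Database-privacy says that `W_{k̄}` is independent of `(A, Q)`, so
`H(W_{k̄}) + H(A, Q) = H(W_{k̄}, A, Q) ≤ H(A, Q, W, S) = H(Q, W, S)`, the last equality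
because `A` is determined by `(Q, W, S)`. Subadditivity bounds `H(Q, W, S)` by
`H(Q) + H(W_{k̄}) + H(W_k) + H(S)`; cancelling `H(W_{k̄})` leaves `H(A | Q) ≤ H(S) + H(W_k)`.
-/

open Real

section Entropy

variable {Ω α β : Type*} [Fintype Ω] [Fintype α] [DecidableEq α] [Fintype β] [DecidableEq β]
  {p : Ω → ℝ}

lemma probOf_nonneg (hp : ∀ ω, 0 ≤ p ω) (X : Ω → α) (a : α) : 0 ≤ probOf p X a :=
  sum_nonneg fun ω _ => hp ω

lemma le_probOf_self (hp : ∀ ω, 0 ≤ p ω) (X : Ω → α) (ω : Ω) : p ω ≤ probOf p X (X ω) :=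
  single_le_sum (fun ω _ => hp ω) (by simp)

lemma probOf_le_probOf_comp (hp : ∀ ω, 0 ≤ p ω) (f : α → β) (X : Ω → α) (a : α) :
    probOf p X a ≤ probOf p (fun ω => f (X ω)) (f a) :=
  sum_le_sum_of_subset_of_nonneg (fun ω => by simp +contextual) fun ω _ _ => hp ω

lemma sum_probOf_mul (p : Ω → ℝ) (X : Ω → α) (g : α → ℝ) :
    ∑ a, probOf p X a * g a = ∑ ω, p ω * g (X ω) := by
  simp only [probOf, sum_mul]
  rw [← sum_fiberwise univ X fun ω => p ω * g (X ω)]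
  exact sum_congr rfl fun a _ => sum_congr rfl fun ω hω => by rw [(mem_filter.1 hω).2]

lemma sum_probOf (p : Ω → ℝ) (X : Ω → α) : ∑ a, probOf p X a = ∑ ω, p ω := by
  simpa using sum_probOf_mul p X 1

lemma entH_eq_neg_sum (p : Ω → ℝ) (X : Ω → α) :
    entH p X = -∑ ω, p ω * log (probOf p X (X ω)) := by
  rw [entH, sum_probOf_mul p X fun a => log (probOf p X a)]

lemma entH_comp_le (hp : ∀ ω, 0 ≤ p ω) (f : α → β) (X : Ω → α) :
    entH p (fun ω => f (X ω)) ≤ entH p X := by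
  rw [entH_eq_neg_sum, entH_eq_neg_sum, neg_le_neg_iff]
  refine sum_le_sum fun ω _ => ?_
  rcases (hp ω).eq_or_lt with h | h
  · simp [← h]
  · exact mul_le_mul_of_nonneg_left (log_le_log (h.trans_le (le_probOf_self hp X ω))
      (probOf_le_probOf_comp hp f X (X ω))) h.le

/-- Gibbs' inequality. -/
lemma sum_mul_log_le_sum_mul_log {ι : Type*} [Fintype ι] {r q : ι → ℝ} (hr : ∀ i, 0 ≤ r i)
    (hq : ∀ i, 0 ≤ q i) (hrq : ∀ i, 0 < r i → 0 < q i) (hsum : ∑ i, q i ≤ ∑ i, r i) :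
    ∑ i, r i * log (q i) ≤ ∑ i, r i * log (r i) := by
  have key : ∀ i, r i * log (q i) - r i * log (r i) ≤ q i - r i := by
    intro i
    rcases (hr i).eq_or_lt with h | h
    · simp [← h, hq i]
    · have hqi := hrq i h
      calc r i * log (q i) - r i * log (r i) = r i * log (q i / r i) := by
            rw [log_div hqi.ne' h.ne']; ring
        _ ≤ r i * (q i / r i - 1) :=
            mul_le_mul_of_nonneg_left (log_le_sub_one_of_pos (div_pos hqi h)) h.le
        _ = q i - r i := by field_simp
  have := sum_le_sum fun i (_ : i ∈ univ) => key i
  simp only [sum_sub_distrib] at this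
  linarith

lemma entH_pair_le (hp : IsPMF p) (X : Ω → α) (Y : Ω → β) :
    entH p (fun ω => (X ω, Y ω)) ≤ entH p X + entH p Y := by
  obtain ⟨hp0, hp1⟩ := hp
  set Z : Ω → α × β := fun ω => (X ω, Y ω)
  have hfst (z : α × β) : probOf p Z z ≤ probOf p X z.1 := probOf_le_probOf_comp hp0 Prod.fst Z z
  have hsnd (z : α × β) : probOf p Z z ≤ probOf p Y z.2 := probOf_le_probOf_comp hp0 Prod.snd Z z
  have hprod : ∑ z : α × β, probOf p X z.1 * probOf p Y z.2 = ∑ z, probOf p Z z := by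
    simp only [Fintype.sum_prod_type, ← mul_sum, sum_probOf, hp1, mul_one]
  have gibbs := sum_mul_log_le_sum_mul_log (probOf_nonneg hp0 Z)
    (fun z => mul_nonneg (probOf_nonneg hp0 X z.1) (probOf_nonneg hp0 Y z.2))
    (fun z hz => mul_pos (hz.trans_le (hfst z)) (hz.trans_le (hsnd z))) hprod.le
  rw [sum_probOf_mul p Z fun z => log (probOf p X z.1 * probOf p Y z.2)] at gibbs
  have hlog : ∑ ω, p ω * log (probOf p X (X ω) * probOf p Y (Y ω))
      = ∑ ω, p ω * log (probOf p X (X ω)) + ∑ ω, p ω * log (probOf p Y (Y ω)) := by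
    rw [← sum_add_distrib]
    refine sum_congr rfl fun ω _ => ?_
    rcases (hp0 ω).eq_or_lt with h | h
    · simp [← h]
    · rw [log_mul (h.trans_le (le_probOf_self hp0 X ω)).ne'
        (h.trans_le (le_probOf_self hp0 Y ω)).ne', mul_add]
  rw [entH, entH_eq_neg_sum p X, entH_eq_neg_sum p Y]
  linarith

lemma entH_pi_le_entH_ne_add {ι : Type*} [Fintype ι] [DecidableEq ι] (hp : IsPMF p)
    (W : ι → Ω → α) (k : ι) :
    entH p (fun ω => fun i => W i ω)
      ≤ entH p (fun ω => fun i : {i // i ≠ k} => W i.1 ω) + entH p (W k) := by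
  let glue (z : ({i // i ≠ k} → α) × α) (i : ι) : α := if h : i = k then z.2 else z.1 ⟨i, h⟩
  have hglue : (fun ω => fun i => W i ω)
      = fun ω => glue ((fun i : {i // i ≠ k} => W i.1 ω), W k ω) := by
    funext ω i
    by_cases h : i = k
    · subst h; simp [glue]
    · simp [glue, h]
  rw [hglue]
  exact (entH_comp_le hp.1 glue _).trans (entH_pair_le hp _ _)

end Entropy

theorem stmt10_general {Ω : Type*} [Fintype Ω]
    {αW αA αQ αS : Type*} [Fintype αW] [DecidableEq αW] [Fintype αA] [DecidableEq αA]
    [Fintype αQ] [DecidableEq αQ] [Fintype αS] [DecidableEq αS]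
    (p : Ω → ℝ) (hp : IsPMF p)
    (K : ℕ) (W : Fin K → Ω → αW) (A : Ω → αA) (Q : Ω → αQ) (S : Ω → αS) (k : Fin K)
    (δ : ℝ) (hδ : 0 ≤ δ)
    -- the answer is a deterministic function of (Q, W, S):
    (hdet : condH p A (fun ω => (Q ω, (fun i => W i ω), S ω)) = 0)
    -- database-privacy:
    (hdb : mutI p (fun ω => fun i : {i // i ≠ k} => W i.1 ω) (fun ω => (A ω, Q ω)) = 0) :
    condH p A Q ≤ entH p S + entH p (W k) + δ := by
  have hproj : entH p (fun ω => ((fun i : {i // i ≠ k} => W i.1 ω), (A ω, Q ω)))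
      ≤ entH p (fun ω => (A ω, (Q ω, (fun i => W i ω), S ω))) :=
    entH_comp_le hp.1
      (fun z : αA × αQ × (Fin K → αW) × αS => ((fun i : {i // i ≠ k} => z.2.2.1 i.1), (z.1, z.2.1)))
      (fun ω => (A ω, (Q ω, (fun i => W i ω), S ω)))
  have hQWS := entH_pair_le hp Q fun ω => ((fun i => W i ω), S ω)
  have hWS := entH_pair_le hp (fun ω => fun i => W i ω) S
  have hW := entH_pi_le_entH_ne_add hp W k
  rw [mutI] at hdb
  rw [condH] at hdet ⊢
  linarith

/-- Let `W₁, …, W_K` be independent uniform messages, `S` common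
randomness independent of `(W, Q)`, and `A` a deterministic function of
`(Q, W_{[1:K]}, S)`. If `I(W_{\bar k} ; A, Q) = 0` (database-privacy) and
`H(W_k | A, Q) ≤ δ`, then `H(A | Q) ≤ H(S) + H(W_k) + δ`. -/
theorem stmt10 {Ω : Type*} [Fintype Ω]
    {αW αA αQ αS : Type*} [Fintype αW] [DecidableEq αW] [Fintype αA] [DecidableEq αA]
    [Fintype αQ] [DecidableEq αQ] [Fintype αS] [DecidableEq αS]
    (p : Ω → ℝ) (hp : IsPMF p)
    (K : ℕ) (W : Fin K → Ω → αW) (A : Ω → αA) (Q : Ω → αQ) (S : Ω → αS) (k : Fin K)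
    (δ : ℝ) (hδ : 0 ≤ δ)
    -- the messages are mutually independent and uniform:
    (hWindep : entH p (fun ω => fun i => W i ω) = ∑ i, entH p (W i))
    (hWunif : ∀ i, entH p (W i) = Real.log (Fintype.card αW))
    -- the common randomness is independent of the messages and queries:
    (hSindep : mutI p S (fun ω => ((fun i => W i ω), Q ω)) = 0)
    -- the answer is a deterministic function of (Q, W, S):
    (hdet : condH p A (fun ω => (Q ω, (fun i => W i ω), S ω)) = 0)
    -- database-privacy:
    (hdb : mutI p (fun ω => fun i : {i // i ≠ k} => W i.1 ω) (fun ω => (A ω, Q ω)) = 0)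
    -- correctness:
    (hcorr : condH p (W k) (fun ω => (A ω, Q ω)) ≤ δ) :
    condH p A Q ≤ entH p S + entH p (W k) + δ :=
  stmt10_general p hp K W A Q S k δ hδ hdet hdb
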